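/- For x ≥ 1, ln(x) - ψ(x) > 1/(2x) + 1/(12x²) - 1/(120x⁴), where ψ is the digamma function. -/

import Mathlib

open Real Filter Topology Set

noncomputable def digamma (x : ℝ) : ℝ := deriv Real.Gamma x / Real.Gamma x

noncomputable def trigamma (x : ℝ) : ℝ := deriv digamma x

/-!
Put `A x = 1/(2x) + 1/(12x²) - 1/(120x⁴)` and `D x = log x - ψ x - A x`. By
`ψ (x+1) = ψ x + 1/x`, `D x - D (x+1) = h x := 1/x - log (x+1) + log x - (A x - A (x+1))`,
and a direct computation gives `h' x = -(5x² + 5x + 1) / (30 x⁵ (x+1)⁵) < 0`. Both `h` and `D`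
are bounded below by `-A`, which tends to `0` (for `D` this is `ψ ≤ log`, from the convexity of
`log ∘ Γ`). A function that strictly decreases under `x ↦ x + 1` and is bounded below by
something tending to `0` is positive; applied first to `h` and then to `D` this gives `D x > 0`
for every `x > 0`.
-/

lemma pos_of_map_add_one_lt {φ ℓ : ℝ → ℝ} {a : ℝ} (hstep : ∀ y > a, φ (y + 1) < φ y)
    (hlow : ∀ y > a, ℓ y ≤ φ y) (hℓ : Tendsto ℓ atTop (𝓝 0)) {y : ℝ} (hy : a < y) :
    0 < φ y := by
  have hmono : ∀ n : ℕ, φ (y + 1 + n) ≤ φ (y + 1) := by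
    intro n
    induction n with
    | zero => simp
    | succ n ih =>
      push_cast
      rw [← add_assoc]
      exact (hstep _ (by linarith [n.cast_nonneg (α := ℝ)])).le.trans ih
  have hlim : Tendsto (fun n : ℕ => ℓ (y + 1 + n)) atTop (𝓝 0) :=
    hℓ.comp (tendsto_atTop_add_const_left _ _ tendsto_natCast_atTop_atTop)
  have hnonneg : 0 ≤ φ (y + 1) :=
    le_of_tendsto hlim <| Eventually.of_forall fun n =>
      (hlow _ (by linarith [n.cast_nonneg (α := ℝ)])).trans (hmono n)
  exact hnonneg.trans_lt (hstep y hy)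

lemma log_Gamma_add_one {x : ℝ} (hx : 0 < x) : log (Gamma (x + 1)) = log (Gamma x) + log x := by
  rw [Gamma_add_one hx.ne', log_mul hx.ne' (Gamma_pos_of_pos hx).ne', add_comm]

lemma differentiableAt_Gamma_of_pos {x : ℝ} (hx : 0 < x) : DifferentiableAt ℝ Gamma x :=
  (differentiableOn_Gamma_Ioi x hx).differentiableAt (Ioi_mem_nhds hx)

lemma differentiableAt_log_comp_Gamma {x : ℝ} (hx : 0 < x) :
    DifferentiableAt ℝ (log ∘ Gamma) x :=
  (differentiableAt_Gamma_of_pos hx).log (Gamma_pos_of_pos hx).ne'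

lemma digamma_eq_deriv_log_comp_Gamma {x : ℝ} (hx : 0 < x) :
    digamma x = deriv (log ∘ Gamma) x := by
  rw [Function.comp_def, deriv.log (differentiableAt_Gamma_of_pos hx) (Gamma_pos_of_pos hx).ne',
    digamma]

lemma digamma_add_one {x : ℝ} (hx : 0 < x) : digamma (x + 1) = digamma x + 1 / x := by
  rw [digamma_eq_deriv_log_comp_Gamma (by linarith), digamma_eq_deriv_log_comp_Gamma hx,
    ← deriv_comp_add_const, one_div, ← deriv_log,
    ← deriv_add (differentiableAt_log_comp_Gamma hx) (differentiableAt_log hx.ne')]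
  apply EventuallyEq.deriv_eq
  filter_upwards [eventually_gt_nhds hx] with y hy using log_Gamma_add_one hy

/-- The slope of the convex function `log ∘ Γ` on `[x, x + 1]` is `log x`. -/
lemma digamma_le_log {x : ℝ} (hx : 0 < x) : digamma x ≤ log x := by
  have hslope : slope (log ∘ Gamma) x (x + 1) = log x := by
    rw [slope_def_field, add_sub_cancel_left, div_one, Function.comp_apply, Function.comp_apply,
      log_Gamma_add_one hx, add_sub_cancel_left]
  rw [digamma_eq_deriv_log_comp_Gamma hx, ← hslope]
  exact convexOn_log_Gamma.deriv_le_slope (mem_Ioi.mpr hx) (mem_Ioi.mpr (by linarith))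
    (by linarith) (differentiableAt_log_comp_Gamma hx)

noncomputable def logSubDigammaApprox (x : ℝ) : ℝ :=
  1 / (2 * x) + 1 / (12 * x ^ 2) - 1 / (120 * x ^ 4)

lemma tendsto_logSubDigammaApprox_atTop : Tendsto logSubDigammaApprox atTop (𝓝 0) := by
  have h1 : Tendsto (fun x : ℝ => 1 / (2 * x)) atTop (𝓝 0) :=
    tendsto_const_nhds.div_atTop (tendsto_id.const_mul_atTop (by norm_num))
  have h2 : Tendsto (fun x : ℝ => 1 / (12 * x ^ 2)) atTop (𝓝 0) :=
    tendsto_const_nhds.div_atTop ((tendsto_pow_atTop two_ne_zero).const_mul_atTop (by norm_num))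
  have h4 : Tendsto (fun x : ℝ => 1 / (120 * x ^ 4)) atTop (𝓝 0) :=
    tendsto_const_nhds.div_atTop ((tendsto_pow_atTop four_ne_zero).const_mul_atTop (by norm_num))
  have h := (h1.add h2).sub h4
  rw [add_zero, sub_zero] at h
  exact h

lemma logSubDigammaApprox_nonneg {x : ℝ} (hx : 1 ≤ x) : 0 ≤ logSubDigammaApprox x := by
  have hquartic : 1 / (120 * x ^ 4) ≤ 1 / (2 * x) :=
    one_div_le_one_div_of_le (by positivity) (by nlinarith [pow_le_pow_left₀ zero_le_one hx 3])
  unfold logSubDigammaApprox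
  have : 0 ≤ 1 / (12 * x ^ 2) := by positivity
  linarith

lemma hasDerivAt_logSubDigammaApprox {x : ℝ} (hx : x ≠ 0) :
    HasDerivAt logSubDigammaApprox (-1 / (2 * x ^ 2) - 1 / (6 * x ^ 3) + 1 / (30 * x ^ 5)) x := by
  have hterm (c : ℝ) (n : ℕ) (hc : c ≠ 0) : HasDerivAt (fun y => 1 / (c * y ^ n))
      ((0 * (c * x ^ n) - 1 * (c * (n * x ^ (n - 1)))) / (c * x ^ n) ^ 2) x :=
    (hasDerivAt_const x 1).fun_div ((hasDerivAt_pow n x).const_mul c) (by simp [hc, hx])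
  have h := ((hterm 2 1 two_ne_zero).fun_add (hterm 12 2 (by norm_num))).fun_sub
    (hterm 120 4 (by norm_num))
  simp only [pow_one] at h
  refine h.congr_deriv ?_
  field_simp
  ring

lemma hasDerivAt_logSubDigammaApprox_step {x : ℝ} (hx : 0 < x) :
    HasDerivAt (fun y => 1 / y - log (y + 1) + log y -
        (logSubDigammaApprox y - logSubDigammaApprox (y + 1)))
      (-(5 * x ^ 2 + 5 * x + 1) / (30 * x ^ 5 * (x + 1) ^ 5)) x := by
  have hx1 : x + 1 ≠ 0 := by positivity
  have h := (((hasDerivAt_inv hx.ne').fun_sub (((hasDerivAt_id' x).add_const 1).log hx1)).fun_add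
    (hasDerivAt_log hx.ne')).fun_sub ((hasDerivAt_logSubDigammaApprox hx.ne').fun_sub
      ((hasDerivAt_logSubDigammaApprox hx1).comp_add_const x 1))
  simp only [one_div]
  refine h.congr_deriv ?_
  field_simp
  ring

lemma logSubDigammaApprox_sub_lt {x : ℝ} (hx : 0 < x) :
    logSubDigammaApprox x - logSubDigammaApprox (x + 1) < 1 / x - log (x + 1) + log x := by
  set h : ℝ → ℝ := fun y => 1 / y - log (y + 1) + log y -
    (logSubDigammaApprox y - logSubDigammaApprox (y + 1)) with hh
  have hanti : StrictAntiOn h (Ioi 0) := by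
    refine strictAntiOn_of_hasDerivWithinAt_neg (convex_Ioi 0)
      (fun y hy => (hasDerivAt_logSubDigammaApprox_step hy).continuousAt.continuousWithinAt)
      (fun y hy => (hasDerivAt_logSubDigammaApprox_step (by simpa using hy)).hasDerivWithinAt)
      fun y hy => ?_
    rw [interior_Ioi, mem_Ioi] at hy
    exact div_neg_of_neg_of_pos (by nlinarith) (by positivity)
  have hlow : ∀ y > 0, -logSubDigammaApprox y ≤ h y := by
    intro y hy
    have hlog : log (y + 1) - log y ≤ 1 / y := by
      rw [← log_div (by positivity) hy.ne']
      calc log ((y + 1) / y) ≤ (y + 1) / y - 1 := log_le_sub_one_of_pos (by positivity)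
        _ = 1 / y := by field_simp; ring
    have := logSubDigammaApprox_nonneg (by linarith : 1 ≤ y + 1)
    simp only [hh]
    linarith
  have hpos := pos_of_map_add_one_lt (fun y hy => hanti hy (by simp only [mem_Ioi]; linarith)
    (by linarith)) hlow (by simpa using tendsto_logSubDigammaApprox_atTop.neg) hx
  simp only [hh] at hpos
  linarith

theorem log_sub_digamma_lower (x : ℝ) (hx : 1 ≤ x) :
    1 / (2 * x) + 1 / (12 * x ^ 2) - 1 / (120 * x ^ 4) < Real.log x - digamma x := by
  have hstep : ∀ y > 0, log (y + 1) - digamma (y + 1) - logSubDigammaApprox (y + 1) <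
      log y - digamma y - logSubDigammaApprox y := by
    intro y hy
    rw [digamma_add_one hy]
    linarith [logSubDigammaApprox_sub_lt hy]
  have hlow : ∀ y > 0, -logSubDigammaApprox y ≤ log y - digamma y - logSubDigammaApprox y :=
    fun y hy => by linarith [digamma_le_log hy]
  have hpos := pos_of_map_add_one_lt hstep hlow
    (by simpa using tendsto_logSubDigammaApprox_atTop.neg) (by linarith : (0 : ℝ) < x)
  rw [logSubDigammaApprox] at hpos
  linarith
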